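/- For odd a ≥ 1, the complete bipartite graph K_{a,b} with b = (3a-1)/2 has minimum degree (2n+1)/5, where n = a + b, and contains no spanning generalized Halin graph. -/

import Mathlib

/-- A generalized Halin graph `H = T ∪ C`: a HIST `T` together with a cycle `C` on the
leaves of `T`, edge-disjoint from `T`, accounting for all edges of `H`. -/
def IsGenHalin {V : Type*} [Fintype V] (H : SimpleGraph V) : Prop :=
  ∃ T : SimpleGraph V, T ≤ H ∧ T.IsTree ∧ (∀ v : V, (T.neighborSet v).ncard ≠ 2) ∧
    ∃ (v : V) (c : H.Walk v v), c.IsCycle ∧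
      (∀ u : V, u ∈ c.support ↔ (T.neighborSet u).ncard = 1) ∧
      (∀ e ∈ c.edges, e ∉ T.edgeSet) ∧
      H.edgeSet = T.edgeSet ∪ {e | e ∈ c.edges}

/-!
A HIST `T` of `K_{a,b}` has `a + b - 1` edges, each with exactly one end on either side, and its
non-leaves have degree at least `3`; so the `b`-side carries at least `(2b - a + 1)/2` leaves.
The leaf cycle alternates between the sides, so both sides carry the same number `ℓ` of leaves.
For `2b = 3a - 1` this gives `a ≤ ℓ`, so every vertex on the `a`-side is a leaf, which makes `T`
a star: `b = 1`, hence `a = 1` and there are too few leaves for a cycle.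
-/

open Finset

namespace SimpleGraph

variable {V : Type*}

theorem IsBipartiteWith.mono {G H : SimpleGraph V} {s t : Set V} (h : G.IsBipartiteWith s t)
    (hHG : H ≤ G) : H.IsBipartiteWith s t :=
  ⟨h.disjoint, fun _ _ hadj => h.mem_of_adj (hHG hadj)⟩

theorem ncard_neighborSet_eq_degree (G : SimpleGraph V) (v : V) [Fintype (G.neighborSet v)] :
    (G.neighborSet v).ncard = G.degree v := by
  rw [Set.ncard_eq_toFinset_card', Set.toFinset_card, card_neighborSet_eq_degree]

section Bipartite

variable [DecidableEq V] {G : SimpleGraph V} {s t : Finset V}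

theorem IsBipartiteWith.two_mul_countP_tail_support_add (h : G.IsBipartiteWith s t)
    {x y : V} (p : G.Walk x y) :
    2 * p.support.tail.countP (· ∈ s) + (if x ∈ s then 1 else 0) =
      p.length + (if y ∈ s then 1 else 0) := by
  induction p with
  | nil => simp
  | @cons u w y hadj q ih =>
    have hside : (u ∈ s ↔ w ∉ s) := by
      have := Finset.disjoint_left.mp (Finset.disjoint_coe.mp h.disjoint)
      rcases h.mem_of_adj hadj with ⟨hu, hw⟩ | ⟨hu, hw⟩ <;> grind
    rw [Walk.support_cons, List.tail_cons, ← Walk.cons_tail_support, List.countP_cons,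
      Walk.length_cons]
    by_cases hw : w ∈ s <;> simp [hw, hside] at ih ⊢ <;> omega

theorem IsBipartiteWith.two_mul_card_inter_support_toFinset (h : G.IsBipartiteWith s t)
    {v : V} {c : G.Walk v v} (hc : c.IsCycle) :
    2 * #(s ∩ c.support.toFinset) = c.length := by
  have hv : v ∈ c.support.tail := by
    rw [← Walk.support_tail_of_not_nil _ hc.not_nil]; exact Walk.end_mem_support _
  have hsupport : c.support.toFinset = c.support.tail.toFinset := by
    conv_lhs => rw [← c.cons_tail_support]
    rw [List.toFinset_cons, Finset.insert_eq_of_mem (by simpa using hv)]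
  have hcount : #(s ∩ c.support.toFinset) = c.support.tail.countP (· ∈ s) := by
    rw [List.countP_eq_length_filter, ← List.toFinset_card_of_nodup (hc.support_nodup.filter _),
      hsupport]
    congr 1; ext; simp [and_comm]
  simpa [hcount] using h.two_mul_countP_tail_support_add c

end Bipartite

section Tree

variable [Fintype V] [DecidableEq V] {T : SimpleGraph V} [DecidableRel T.Adj] {s t : Finset V}

theorem IsTree.sum_degrees_add_one_of_isBipartiteWith (hT : T.IsTree)
    (h : T.IsBipartiteWith s t) (hst : s ∪ t = univ) :
    ∑ v ∈ s, T.degree v + 1 = #s + #t := by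
  rw [isBipartiteWith_sum_degrees_eq_card_edges h, hT.card_edgeFinset,
    ← card_union_of_disjoint (disjoint_coe.mp h.disjoint), hst, card_univ]

theorem IsTree.card_eq_one_of_forall_degree_eq_one (hT : T.IsTree)
    (h : T.IsBipartiteWith s t) (hst : s ∪ t = univ) (hs : ∀ v ∈ s, T.degree v = 1) :
    #t = 1 := by
  have := hT.sum_degrees_add_one_of_isBipartiteWith h hst
  rw [sum_congr rfl hs, sum_const, smul_eq_mul, mul_one] at this
  omega

theorem IsTree.three_mul_card_add_one_le_of_isBipartiteWith [Nontrivial V] (hT : T.IsTree)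
    (hdeg : ∀ v, T.degree v ≠ 2) (h : T.IsBipartiteWith s t) (hst : s ∪ t = univ) :
    3 * #s + 1 ≤ #s + #t + 2 * #{v ∈ s | T.degree v = 1} := by
  have hleaf : ∀ v, 3 ≤ T.degree v + 2 * if T.degree v = 1 then 1 else 0 := fun v => by
    have := hT.connected.preconnected.degree_pos_of_nontrivial v
    have := hdeg v
    split <;> omega
  calc 3 * #s + 1 = ∑ _v ∈ s, 3 + 1 := by rw [sum_const, smul_eq_mul, mul_comm]
    _ ≤ ∑ v ∈ s, (T.degree v + 2 * if T.degree v = 1 then 1 else 0) + 1 := by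
      gcongr with v; exact hleaf v
    _ = #s + #t + 2 * #{v ∈ s | T.degree v = 1} := by
      rw [sum_add_distrib, ← mul_sum, sum_boole, Nat.cast_id, add_right_comm,
        hT.sum_degrees_add_one_of_isBipartiteWith h hst]

end Tree

section CompleteBipartite

variable {A B : Type*}

theorem isBipartiteWith_completeBipartiteGraph [Fintype A] [Fintype B] :
    (completeBipartiteGraph A B).IsBipartiteWith ↑(univ.map .inl : Finset (A ⊕ B))
      ↑(univ.map .inr : Finset (A ⊕ B)) where
  disjoint := by simp [Set.disjoint_left]
  mem_of_adj := by rintro (a | b) (a' | b') <;> simp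

theorem map_inl_union_map_inr [Fintype A] [Fintype B] [DecidableEq (A ⊕ B)] :
    (univ.map .inl ∪ univ.map .inr : Finset (A ⊕ B)) = univ := by
  ext (a | b) <;> simp

theorem degree_completeBipartiteGraph_inl [Fintype A] [Fintype B]
    [DecidableRel (completeBipartiteGraph A B).Adj] (a : A) :
    (completeBipartiteGraph A B).degree (.inl a) = Fintype.card B := by
  have : (completeBipartiteGraph A B).neighborFinset (.inl a) = univ.map .inr := by
    ext (a' | b) <;> simp
  rw [← card_neighborFinset_eq_degree, this, card_map, card_univ]

theorem degree_completeBipartiteGraph_inr [Fintype A] [Fintype B]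
    [DecidableRel (completeBipartiteGraph A B).Adj] (b : B) :
    (completeBipartiteGraph A B).degree (.inr b) = Fintype.card A := by
  have : (completeBipartiteGraph A B).neighborFinset (.inr b) = univ.map .inl := by
    ext (a | b') <;> simp
  rw [← card_neighborFinset_eq_degree, this, card_map, card_univ]

theorem minDegree_completeBipartiteGraph [Fintype A] [Fintype B] [Nonempty A] [Nonempty B]
    [DecidableRel (completeBipartiteGraph A B).Adj] :
    (completeBipartiteGraph A B).minDegree = min (Fintype.card A) (Fintype.card B) := by
  obtain ⟨a⟩ := ‹Nonempty A›
  obtain ⟨b⟩ := ‹Nonempty B›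
  refine le_antisymm (le_min ?_ ?_) (le_minDegree_of_forall_le_degree _ _ ?_)
  · exact (minDegree_le_degree _ (.inr b)).trans_eq (degree_completeBipartiteGraph_inr b)
  · exact (minDegree_le_degree _ (.inl a)).trans_eq (degree_completeBipartiteGraph_inl a)
  · rintro (a | b)
    · exact (min_le_right _ _).trans_eq (degree_completeBipartiteGraph_inl a).symm
    · exact (min_le_left _ _).trans_eq (degree_completeBipartiteGraph_inr b).symm

end CompleteBipartite

end SimpleGraph

open SimpleGraph

theorem stmt_5_general {A B : Type*} [Fintype A] [Fintype B]
    [DecidableRel (completeBipartiteGraph A B).Adj]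
    (ha1 : 1 ≤ Fintype.card A)
    (hb : 2 * Fintype.card B = 3 * Fintype.card A - 1) :
    5 * (completeBipartiteGraph A B).minDegree = 2 * Fintype.card (A ⊕ B) + 1 ∧
      ¬ ∃ H : SimpleGraph (A ⊕ B), H ≤ completeBipartiteGraph A B ∧ IsGenHalin H := by
  classical
  have : Nonempty A := Fintype.card_pos_iff.mp ha1
  have : Nonempty B := Fintype.card_pos_iff.mp (by omega)
  have : Nontrivial (A ⊕ B) :=
    nontrivial_of_ne (.inl (Classical.arbitrary A)) (.inr (Classical.arbitrary B)) Sum.inl_ne_inr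
  refine ⟨by rw [minDegree_completeBipartiteGraph, Fintype.card_sum]; omega, ?_⟩
  rintro ⟨H, hHK, T, hTH, hT, hdeg2, v, c, hc, hleaf, -, -⟩
  have hdeg : ∀ u, T.degree u ≠ 2 := by simpa [ncard_neighborSet_eq_degree] using hdeg2
  set sA : Finset (A ⊕ B) := univ.map .inl
  set sB : Finset (A ⊕ B) := univ.map .inr
  have hK : (completeBipartiteGraph A B).IsBipartiteWith sA sB :=
    isBipartiteWith_completeBipartiteGraph
  have hTK := hK.mono (hTH.trans hHK)
  have hleaves : c.support.toFinset = ({u | T.degree u = 1} : Finset (A ⊕ B)) := by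
    ext u; simp [hleaf, ncard_neighborSet_eq_degree]
  have hcycA := (hK.mono hHK).two_mul_card_inter_support_toFinset hc
  have hcycB := (hK.mono hHK).symm.two_mul_card_inter_support_toFinset hc
  rw [hleaves, inter_filter, inter_univ] at hcycA hcycB
  have hcardA : #sA = Fintype.card A := by simp [sA]
  have hcardB : #sB = Fintype.card B := by simp [sB]
  have hleavesB := hT.three_mul_card_add_one_le_of_isBipartiteWith hdeg hTK.symm
    (by rw [union_comm]; exact map_inl_union_map_inr)
  have hleavesA : #{u ∈ sA | T.degree u = 1} = #sA :=
    le_antisymm (card_filter_le _ _) (by omega)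
  have hstar := hT.card_eq_one_of_forall_degree_eq_one hTK map_inl_union_map_inr
    (card_filter_eq_iff.mp hleavesA)
  have := hc.three_le_length
  omega

/-- For odd `a ≥ 1` and `b = (3a-1)/2` (i.e. `2b = 3a - 1`), the complete bipartite graph
`K_{a,b}` has minimum degree `(2n+1)/5` where `n = a + b` (i.e. `5δ = 2n + 1`), and it
contains no spanning generalized Halin graph. -/
theorem stmt_5 {A B : Type*} [Fintype A] [Fintype B]
    [DecidableRel (completeBipartiteGraph A B).Adj]
    (ha1 : 1 ≤ Fintype.card A) (haodd : Odd (Fintype.card A))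
    (hb : 2 * Fintype.card B = 3 * Fintype.card A - 1) :
    5 * (completeBipartiteGraph A B).minDegree = 2 * Fintype.card (A ⊕ B) + 1 ∧
      ¬ ∃ H : SimpleGraph (A ⊕ B), H ≤ completeBipartiteGraph A B ∧ IsGenHalin H :=
  stmt_5_general ha1 hb
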